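/- Let θ > 1 and α, β > −1. For z, u ∈ E_θ define JK_{α,β}(z,u) = c_{α,β} ∑_{k,l=0}^∞ b_{k,l}^{α,β} θ^{k+l} (1−z)^k (1−conj(u))^k (1+z)^l (1+conj(u))^l / (θ+1)^{2(k+l)}, where b_{k,l}^{α,β} = ( ((α+β)/2 + 1)_{k+l} ((α+β+3)/2)_{k+l} ) / ( (α+1)_k (β+1)_l k! l! ) and c_{α,β} = θ^{α+β+1}(θ−1)/( τ(α,β) (θ+1)^{α+β+2} ) with τ(α,β) = 2^{α+β+1}Γ(α+1)Γ(β+1)/Γ(α+β+2); the double series converges absolutely for z, u ∈ E_θ. Then for every γ > max{α, β} there exists M > 0 such that for every n ∈ ℕ, all z_1,…,z_n ∈ E_θ and all c_1,…,c_n ∈ ℂ: 0 ≤ ∑_{i,j=1}^n JK_{α,β}(z_i, z_j) c_i conj(c_j) ≤ M ∑_{i,j=1}^n JK_{γ,γ}(z_i, z_j) c_i conj(c_j); and for every η with −1 < η < min{α, β} there exists m > 0 such that m ∑_{i,j=1}^n JK_{η,η}(z_i, z_j) c_i conj(c_j) ≤ ∑_{i,j=1}^n JK_{α,β}(z_i,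 z_j) c_i conj(c_j) for all such choices. -/

import Mathlib

open Real

/-- `b_{k,l}^{α,β} = ((α+β)/2+1)_{k+l} ((α+β+3)/2)_{k+l} / ((α+1)_k (β+1)_l k! l!)`,
where `(x)_k` is the Pochhammer symbol. -/
noncomputable def bCoef (α β : ℝ) (k l : ℕ) : ℝ :=
  ((ascPochhammer ℝ (k + l)).eval ((α + β) / 2 + 1) *
    (ascPochhammer ℝ (k + l)).eval ((α + β + 3) / 2)) /
    ((ascPochhammer ℝ k).eval (α + 1) * (ascPochhammer ℝ l).eval (β + 1) *
      k.factorial * l.factorial)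

/-- `τ(α,β) = 2^{α+β+1} Γ(α+1) Γ(β+1) / Γ(α+β+2)`. -/
noncomputable def tauConst (α β : ℝ) : ℝ :=
  2 ^ (α + β + 1) * Real.Gamma (α + 1) * Real.Gamma (β + 1) / Real.Gamma (α + β + 2)

/-- `c_{α,β} = θ^{α+β+1}(θ−1)/(τ(α,β)(θ+1)^{α+β+2})`. -/
noncomputable def cConst (θ α β : ℝ) : ℝ :=
  θ ^ (α + β + 1) * (θ - 1) / (tauConst α β * (θ + 1) ^ (α + β + 2))

/-- The `(k,l)`-th term of the double series defining the Jacobi kernel `JK_{α,β}`. -/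
noncomputable def jkTerm (θ α β : ℝ) (z u : ℂ) (p : ℕ × ℕ) : ℂ :=
  ((bCoef α β p.1 p.2 : ℝ) : ℂ) * (θ : ℂ) ^ (p.1 + p.2) *
    (1 - z) ^ p.1 * (1 - (starRingEnd ℂ) u) ^ p.1 *
    (1 + z) ^ p.2 * (1 + (starRingEnd ℂ) u) ^ p.2 / ((θ : ℂ) + 1) ^ (2 * (p.1 + p.2))

/-- The Jacobi reproducing kernel `JK_{α,β}(z,u)` given by Bailey's formula. -/
noncomputable def jkK (θ α β : ℝ) (z u : ℂ) : ℂ :=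
  ((cConst θ α β : ℝ) : ℂ) * ∑' p : ℕ × ℕ, jkTerm θ α β z u p

/-- The open ellipse `E_θ = {z : |z−1| + |z+1| < θ^{1/2} + θ^{−1/2}}` with foci `±1`. -/
def ellipseE (θ : ℝ) : Set ℂ :=
  {z : ℂ | ‖z - 1‖ + ‖z + 1‖ < Real.sqrt θ + (Real.sqrt θ)⁻¹}

set_option maxHeartbeats 1000000
open Real Filter

noncomputable def pc (x : ℝ) (n : ℕ) : ℝ := (ascPochhammer ℝ n).eval x
lemma pc_succ (x : ℝ) (n : ℕ) : pc x (n+1) = pc x n * (x + n) := ascPochhammer_succ_eval n x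
lemma pc_pos {x : ℝ} (hx : 0 < x) (n : ℕ) : 0 < pc x n := ascPochhammer_pos n x hx
lemma pc_zero (x : ℝ) : pc x 0 = 1 := by simp [pc]
lemma pc_one (n : ℕ) : pc 1 n = n.factorial := by simp [pc]
lemma pc_mono {x y : ℝ} (hx : 0 < x) (hxy : x ≤ y) (n : ℕ) : pc x n ≤ pc y n := by
  induction n with
  | zero => simp [pc]
  | succ n ih =>
    rw [pc_succ, pc_succ]
    have h1 : (0:ℝ) < x + n := by positivity
    have := pc_pos hx n
    nlinarith [pc_pos (lt_of_lt_of_le hx hxy) n]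
lemma pc_ratio_mono {a b : ℝ} (ha : 0 < a) (hab : a ≤ b) {k n : ℕ} (hkn : k ≤ n) :
    pc b k * pc a n ≤ pc a k * pc b n := by
  induction n, hkn using Nat.le_induction with
  | base => rw [mul_comm]
  | succ n hkn ih =>
    rw [pc_succ, pc_succ]
    have h1 : (0:ℝ) < a + n := by positivity
    have h2 : a + (n:ℝ) ≤ b + n := by linarith
    have hb := pc_pos (lt_of_lt_of_le ha hab) n
    have hak := pc_pos ha k
    calc pc b k * (pc a n * (a+n)) = (pc b k * pc a n) * (a+n) := by ring
    _ ≤ (pc a k * pc b n) * (a+n) := by nlinarith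
    _ ≤ pc a k * (pc b n * (b+n)) := by nlinarith [mul_pos hak hb]
lemma bCoef_eq (α β : ℝ) (k l : ℕ) :
    bCoef α β k l = pc ((α+β)/2+1) (k+l) * pc ((α+β+3)/2) (k+l) /
      (pc (α+1) k * pc (β+1) l * k.factorial * l.factorial) := rfl

lemma bCoef_le {α β μ : ℝ} (hα : -1 < α) (hβ : -1 < β) (hμ1 : 0 < μ+1)
    (hμα : μ ≤ α) (hμβ : μ ≤ β) (hμ0 : μ ≤ 0) (k l : ℕ) :
    bCoef α β k l ≤ pc ((α+β)/2+1) (k+l) * pc ((α+β+3)/2) (k+l) / (pc (μ+1) (k+l))^2 *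
      (((k+l).choose k : ℝ))^2 := by
  set n := k + l with hn
  have hkn : k ≤ n := Nat.le_add_right k l
  have hs1 : (0:ℝ) < (α+β)/2+1 := by linarith
  have hs2 : (0:ℝ) < (α+β+3)/2 := by linarith
  have hN : (0:ℝ) ≤ pc ((α+β)/2+1) n * pc ((α+β+3)/2) n :=
    (mul_pos (pc_pos hs1 n) (pc_pos hs2 n)).le
  have hP := pc_pos hμ1 n
  have hPk := pc_pos hμ1 k
  have hPl := pc_pos hμ1 l
  have hkf : (0:ℝ) < k.factorial := by positivity
  have hlf : (0:ℝ) < l.factorial := by positivity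
  have hD1 : (0:ℝ) < pc (α+1) k * pc (β+1) l * k.factorial * l.factorial := by
    have := pc_pos (show (0:ℝ) < α+1 by linarith) k
    have := pc_pos (show (0:ℝ) < β+1 by linarith) l
    positivity
  have hB : ((n.choose k : ℝ)) * k.factorial * l.factorial = n.factorial := by
    have := Nat.choose_mul_factorial_mul_factorial hkn
    have hnk : n - k = l := by omega
    rw [hnk] at this
    exact_mod_cast congrArg (Nat.cast : ℕ → ℝ) this
  have hBpos : (0:ℝ) < (n.choose k : ℝ) := by
    exact_mod_cast Nat.cast_pos.mpr (Nat.choose_pos hkn)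
  -- step: P^2 ≤ B^2 * D1
  have c2 : (k.factorial : ℝ) * pc (μ+1) n ≤ pc (μ+1) k * n.factorial := by
    have := pc_ratio_mono hμ1 (show μ+1 ≤ 1 by linarith) hkn
    rwa [pc_one, pc_one] at this
  have c3 : (l.factorial : ℝ) * pc (μ+1) n ≤ pc (μ+1) l * n.factorial := by
    have := pc_ratio_mono hμ1 (show μ+1 ≤ 1 by linarith) (Nat.le_add_left l k)
    rwa [pc_one, pc_one] at this
  have d2 : ((k.factorial : ℝ) * pc (μ+1) n) * ((l.factorial : ℝ) * pc (μ+1) n) ≤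
      (pc (μ+1) k * n.factorial) * (pc (μ+1) l * n.factorial) :=
    mul_le_mul c2 c3 (by positivity) (by positivity)
  have hPsq : (pc (μ+1) n)^2 ≤
      ((n.choose k : ℝ))^2 * (pc (μ+1) k * pc (μ+1) l * k.factorial * l.factorial) := by
    have hff : (0:ℝ) < (k.factorial : ℝ) * l.factorial := by positivity
    rw [← mul_le_mul_iff_of_pos_right hff]
    calc (pc (μ+1) n)^2 * ((k.factorial:ℝ) * l.factorial)
        = ((k.factorial : ℝ) * pc (μ+1) n) * ((l.factorial : ℝ) * pc (μ+1) n) := by ring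
      _ ≤ (pc (μ+1) k * n.factorial) * (pc (μ+1) l * n.factorial) := d2
      _ = ((n.choose k : ℝ))^2 * (pc (μ+1) k * pc (μ+1) l * k.factorial * l.factorial) *
          ((k.factorial:ℝ) * l.factorial) := by rw [← hB]; ring
  have hD2le : pc (μ+1) k * pc (μ+1) l * (k.factorial : ℝ) * l.factorial ≤
      pc (α+1) k * pc (β+1) l * k.factorial * l.factorial := by
    have m1 := pc_mono hμ1 (show μ+1 ≤ α+1 by linarith) k
    have m2 := pc_mono hμ1 (show μ+1 ≤ β+1 by linarith) l
    have m3 := mul_le_mul m1 m2 hPl.le (pc_pos (show (0:ℝ) < α+1 by linarith) k).le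
    have h9 : (0:ℝ) ≤ (k.factorial : ℝ) * l.factorial := by positivity
    nlinarith
  have hkey : (pc (μ+1) n)^2 ≤
      ((n.choose k : ℝ))^2 * (pc (α+1) k * pc (β+1) l * k.factorial * l.factorial) :=
    hPsq.trans (mul_le_mul_of_nonneg_left hD2le (by positivity))
  rw [bCoef_eq, div_mul_eq_mul_div, div_le_div_iff₀ hD1 (pow_pos hP 2)]
  calc pc ((α+β)/2+1) (k+l) * pc ((α+β+3)/2) (k+l) * (pc (μ+1) (k+l))^2
      ≤ pc ((α+β)/2+1) (k+l) * pc ((α+β+3)/2) (k+l) *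
        (((n.choose k : ℝ))^2 * (pc (α+1) k * pc (β+1) l * k.factorial * l.factorial)) :=
        mul_le_mul_of_nonneg_left hkey hN
    _ = pc ((α+β)/2+1) (k+l) * pc ((α+β+3)/2) (k+l) * (((k+l).choose k : ℝ))^2 *
        (pc (α+1) k * pc (β+1) l * k.factorial * l.factorial) := by rw [hn]; ring
lemma sum_inv_sq_le (n : ℕ) : ∑ j ∈ Finset.range n, (1:ℝ)/((j:ℝ)+1)^2 ≤ 3 - 2/((n:ℝ)+1) := by
  induction n with
  | zero => norm_num
  | succ n ih =>
    rw [Finset.sum_range_succ]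
    have h1 : (0:ℝ) < (n:ℝ)+1 := by positivity
    have h2 : (0:ℝ) < (n:ℝ)+1+1 := by positivity
    have key : 1/((n:ℝ)+1)^2 + 2/((n:ℝ)+1+1) ≤ 2/((n:ℝ)+1) := by
      rw [div_add_div _ _ (by positivity) (by positivity), div_le_div_iff₀ (by positivity) h1]
      nlinarith [sq_nonneg ((n:ℝ)+1)]
    push_cast
    linarith

lemma pc_triple_bounded {a1 a2 a3 b1 b2 b3 : ℝ} (ha1 : 0 < a1) (ha2 : 0 < a2) (ha3 : 0 < a3)
    (hb1 : 0 < b1) (hb2 : 0 < b2) (hb3 : 0 < b3) (hsum : a1 + a2 + a3 = b1 + b2 + b3) :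
    ∃ C : ℝ, 0 < C ∧ ∀ n, pc a1 n * pc a2 n * pc a3 n ≤ C * (pc b1 n * pc b2 n * pc b3 n) := by
  obtain ⟨m, hm0, hmb1, hmb2, hmb3⟩ : ∃ m : ℝ, 0 < m ∧ m ≤ b1 ∧ m ≤ b2 ∧ m ≤ b3 :=
    ⟨min b1 (min b2 b3), lt_min hb1 (lt_min hb2 hb3), min_le_left _ _,
      (min_le_right b1 _).trans (min_le_left _ _), (min_le_right b1 _).trans (min_le_right _ _)⟩
  obtain ⟨t, ht1, htm⟩ : ∃ t : ℝ, 1 ≤ t ∧ 1/m ≤ t := ⟨max 1 (1/m), le_max_left _ _, le_max_right _ _⟩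
  have ht0 : (0:ℝ) < t := lt_of_lt_of_le one_pos ht1
  obtain ⟨A, hA0, hA1, hA2⟩ : ∃ A : ℝ, 0 ≤ A ∧
      a1*a2+a1*a3+a2*a3 - (b1*b2+b1*b3+b2*b3) ≤ A ∧ a1*a2*a3 - b1*b2*b3 ≤ A := by
    refine ⟨|a1*a2+a1*a3+a2*a3 - (b1*b2+b1*b3+b2*b3)| + |a1*a2*a3 - b1*b2*b3|, by positivity, ?_, ?_⟩
    · nlinarith [le_abs_self (a1*a2+a1*a3+a2*a3 - (b1*b2+b1*b3+b2*b3)), abs_nonneg (a1*a2*a3 - b1*b2*b3)]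
    · nlinarith [le_abs_self (a1*a2*a3 - b1*b2*b3), abs_nonneg (a1*a2+a1*a3+a2*a3 - (b1*b2+b1*b3+b2*b3))]
  set K : ℝ := A * t^3 with hK
  have hK0 : 0 ≤ K := by positivity
  have step : ∀ j : ℕ, (a1+j)*(a2+j)*(a3+j) ≤ (1 + K/((j:ℝ)+1)^2) * ((b1+j)*(b2+j)*(b3+j)) := by
    intro j
    have hx0 : (0:ℝ) ≤ (j:ℝ) := Nat.cast_nonneg j
    set x : ℝ := (j:ℝ) with hx
    have hb1x : 0 < b1 + x := by positivity
    have hb2x : 0 < b2 + x := by positivity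
    have hb3x : 0 < b3 + x := by positivity
    have hcl1 : ∀ b : ℝ, m ≤ b → x + 1 ≤ t*(b+x) := by
      intro b hb
      have h1 : 1 ≤ (1/m)*b := by rw [one_div, inv_mul_eq_div, le_div_iff₀ hm0]; linarith
      have h2 : (1/m)*b ≤ t*b := mul_le_mul_of_nonneg_right htm (hm0.trans_le hb).le
      nlinarith
    have c1 : x + 1 ≤ t*(b1+x) := hcl1 b1 hmb1
    have c2 : x + 1 ≤ t*(b2+x) := hcl1 b2 hmb2
    have c3 : x + 1 ≤ t*(b3+x) := hcl1 b3 hmb3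
    have cube : (x+1)^3 ≤ t^3 * ((b1+x)*(b2+x)*(b3+x)) := by
      have h12 : (x+1)*(x+1) ≤ (t*(b1+x))*(t*(b2+x)) :=
        mul_le_mul c1 c2 (by linarith) (by positivity)
      have h123 : ((x+1)*(x+1))*(x+1) ≤ ((t*(b1+x))*(t*(b2+x)))*(t*(b3+x)) :=
        mul_le_mul h12 c3 (by linarith) (by positivity)
      nlinarith [h123]
    have diff : (a1+x)*(a2+x)*(a3+x) - (b1+x)*(b2+x)*(b3+x) ≤ A*(x+1) := by
      have e1 : (a1+x)*(a2+x)*(a3+x) - (b1+x)*(b2+x)*(b3+x)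
          = (a1*a2+a1*a3+a2*a3 - (b1*b2+b1*b3+b2*b3))*x + (a1*a2*a3 - b1*b2*b3) := by
        linear_combination x^2 * hsum
      rw [e1]
      nlinarith [mul_le_mul_of_nonneg_right hA1 hx0]
    have key : A*(x+1) ≤ K/(x+1)^2 * ((b1+x)*(b2+x)*(b3+x)) := by
      rw [div_mul_eq_mul_div, le_div_iff₀ (by positivity)]
      calc A*(x+1) * (x+1)^2 = A * (x+1)^3 := by ring
      _ ≤ A * (t^3 * ((b1+x)*(b2+x)*(b3+x))) := mul_le_mul_of_nonneg_left cube hA0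
      _ = K * ((b1+x)*(b2+x)*(b3+x)) := by rw [hK]; ring
    have expand : (1 + K/(x+1)^2) * ((b1+x)*(b2+x)*(b3+x))
        = (b1+x)*(b2+x)*(b3+x) + K/(x+1)^2 * ((b1+x)*(b2+x)*(b3+x)) := by ring
    rw [expand]
    linarith
  refine ⟨Real.exp (3*K), Real.exp_pos _, ?_⟩
  have main : ∀ n, pc a1 n * pc a2 n * pc a3 n ≤
      Real.exp (K * ∑ j ∈ Finset.range n, 1/((j:ℝ)+1)^2) * (pc b1 n * pc b2 n * pc b3 n) := by
    intro n
    induction n with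
    | zero => simp [pc_zero]
    | succ n ih =>
      rw [Finset.sum_range_succ, pc_succ, pc_succ, pc_succ, pc_succ, pc_succ, pc_succ]
      have hPb : 0 < pc b1 n * pc b2 n * pc b3 n :=
        mul_pos (mul_pos (pc_pos hb1 n) (pc_pos hb2 n)) (pc_pos hb3 n)
      have hN0 : 0 ≤ (a1+(n:ℝ))*(a2+n)*(a3+n) := by positivity
      have hE : 0 < Real.exp (K * ∑ j ∈ Finset.range n, 1/((j:ℝ)+1)^2) := Real.exp_pos _
      calc pc a1 n * (a1+n) * (pc a2 n * (a2+n)) * (pc a3 n * (a3+n))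
          = (pc a1 n * pc a2 n * pc a3 n) * ((a1+(n:ℝ))*(a2+n)*(a3+n)) := by ring
        _ ≤ (Real.exp (K * ∑ j ∈ Finset.range n, 1/((j:ℝ)+1)^2) * (pc b1 n * pc b2 n * pc b3 n)) *
            ((1 + K/((n:ℝ)+1)^2) * ((b1+n)*(b2+n)*(b3+n))) :=
            mul_le_mul ih (step n) hN0 (by positivity)
        _ ≤ (Real.exp (K * ∑ j ∈ Finset.range n, 1/((j:ℝ)+1)^2) * (pc b1 n * pc b2 n * pc b3 n)) *
            (Real.exp (K * (1/((n:ℝ)+1)^2)) * ((b1+n)*(b2+n)*(b3+n))) := by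
            have h1 : 1 + K/((n:ℝ)+1)^2 ≤ Real.exp (K * (1/((n:ℝ)+1)^2)) := by
              have h3 := Real.add_one_le_exp (K * (1/((n:ℝ)+1)^2))
              have h2 : K/((n:ℝ)+1)^2 = K * (1/((n:ℝ)+1)^2) := by ring
              linarith
            have hb : (0:ℝ) ≤ (b1+(n:ℝ))*(b2+n)*(b3+n) := by positivity
            have h4 := mul_le_mul_of_nonneg_right h1 hb
            exact mul_le_mul_of_nonneg_left h4 (mul_pos hE hPb).le
        _ = Real.exp (K * (∑ j ∈ Finset.range n, 1/((j:ℝ)+1)^2 + 1/((n:ℝ)+1)^2)) *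
            ((pc b1 n * (b1+n)) * (pc b2 n * (b2+n)) * (pc b3 n * (b3+n))) := by
            have heq : Real.exp (K * (∑ j ∈ Finset.range n, 1/((j:ℝ)+1)^2 + 1/((n:ℝ)+1)^2))
                = Real.exp (K * ∑ j ∈ Finset.range n, 1/((j:ℝ)+1)^2) *
                  Real.exp (K * (1/((n:ℝ)+1)^2)) := by
              rw [mul_add, Real.exp_add]
            rw [heq]; ring
  intro n
  refine (main n).trans (mul_le_mul_of_nonneg_right ?_
    (mul_pos (mul_pos (pc_pos hb1 n) (pc_pos hb2 n)) (pc_pos hb3 n)).le)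
  apply Real.exp_le_exp.mpr
  have h6 := sum_inv_sq_le n
  have hinv : 0 < 2/((n:ℝ)+1) := by positivity
  nlinarith
lemma bCoef_pos {α β : ℝ} (hα : -1 < α) (hβ : -1 < β) (k l : ℕ) : 0 < bCoef α β k l := by
  rw [bCoef_eq]
  have h1 : (0:ℝ) < (α+β)/2+1 := by linarith
  have h2 : (0:ℝ) < (α+β+3)/2 := by linarith
  have hk : (0:ℝ) < k.factorial := by positivity
  have hl : (0:ℝ) < l.factorial := by positivity
  exact div_pos (mul_pos (pc_pos h1 _) (pc_pos h2 _))
    (mul_pos (mul_pos (mul_pos (pc_pos (by linarith) k) (pc_pos (by linarith) l)) hk) hl)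

noncomputable def rT (θ α β : ℝ) (p : ℕ × ℕ) : ℝ :=
  bCoef α β p.1 p.2 * θ^(p.1+p.2) / (θ+1)^(2*(p.1+p.2))

lemma rT_pos {θ α β : ℝ} (hθ : 1 < θ) (hα : -1 < α) (hβ : -1 < β) (p : ℕ × ℕ) :
    0 < rT θ α β p := by
  have h0 : (0:ℝ) < θ := by linarith
  have h1 : (0:ℝ) < θ+1 := by linarith
  exact div_pos (mul_pos (bCoef_pos hα hβ _ _) (by positivity)) (by positivity)

noncomputable def gP (p : ℕ × ℕ) (z : ℂ) : ℂ := (1-z)^p.1 * (1+z)^p.2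

lemma jkTerm_eq (θ α β : ℝ) (z u : ℂ) (p : ℕ × ℕ) :
    jkTerm θ α β z u p = ((rT θ α β p : ℝ) : ℂ) * gP p z * (starRingEnd ℂ) (gP p u) := by
  unfold jkTerm rT gP
  push_cast
  rw [map_mul, map_pow, map_pow, map_sub, map_add, map_one]
  ring

lemma norm_jkTerm {θ α β : ℝ} (hθ : 1 < θ) (hα : -1 < α) (hβ : -1 < β) (z u : ℂ) (p : ℕ × ℕ) :
    ‖jkTerm θ α β z u p‖ = rT θ α β p * (‖gP p z‖ * ‖gP p u‖) := by
  rw [jkTerm_eq, norm_mul, norm_mul, Complex.norm_conj, Complex.norm_real, Real.norm_eq_abs,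
    abs_of_pos (rT_pos hθ hα hβ p), mul_assoc]
lemma tendsto_ratio_aux (a b : ℝ) (hb : 0 < b) :
    Tendsto (fun n : ℕ => (a+(n:ℝ))/(b+(n:ℝ))) atTop (nhds 1) := by
  have h1 : Tendsto (fun n : ℕ => b + (n:ℝ)) atTop atTop :=
    tendsto_atTop_add_const_left _ b tendsto_natCast_atTop_atTop
  have h2 : Tendsto (fun n : ℕ => (a - b)/(b+(n:ℝ))) atTop (nhds 0) :=
    Tendsto.div_atTop tendsto_const_nhds h1
  have h3 : Tendsto (fun n : ℕ => 1 + (a - b)/(b+(n:ℝ))) atTop (nhds 1) := by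
    simpa using tendsto_const_nhds.add h2
  refine h3.congr (fun n => ?_)
  have hbn : b + (n:ℝ) ≠ 0 := by positivity
  field_simp
  ring
lemma summable_pc_ratio_geom {a b c r : ℝ} (ha : 0 < a) (hb : 0 < b) (hc : 0 < c)
    (hr0 : 0 < r) (hr1 : r < 1) :
    Summable (fun n : ℕ => pc a n * pc b n / (pc c n)^2 * r^n) := by
  set f : ℕ → ℝ := fun n => pc a n * pc b n / (pc c n)^2 * r^n with hf
  have hfpos : ∀ n, 0 < f n := fun n =>
    mul_pos (div_pos (mul_pos (pc_pos ha n) (pc_pos hb n)) (pow_pos (pc_pos hc n) 2)) (by positivity)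
  have hratio : ∀ n : ℕ, ‖f (n+1)‖ / ‖f n‖ = ((a+(n:ℝ))/(c+(n:ℝ))) * ((b+(n:ℝ))/(c+(n:ℝ))) * r := by
    intro n
    rw [Real.norm_of_nonneg (hfpos (n+1)).le, Real.norm_of_nonneg (hfpos n).le, hf]
    simp only [pc_succ]
    have h1 := (pc_pos ha n).ne'
    have h2 := (pc_pos hb n).ne'
    have h3 := (pc_pos hc n).ne'
    have h4 : c + (n:ℝ) ≠ 0 := by positivity
    have h5 : r ≠ 0 := hr0.ne'
    have h6 : (r:ℝ)^n ≠ 0 := pow_ne_zero _ h5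
    field_simp
    ring
  apply summable_of_ratio_test_tendsto_lt_one hr1 (Eventually.of_forall (fun n => (hfpos n).ne'))
  rw [show (fun n => ‖f (n+1)‖ / ‖f n‖) = fun n : ℕ => ((a+(n:ℝ))/(c+(n:ℝ))) * ((b+(n:ℝ))/(c+(n:ℝ))) * r from funext hratio]
  have := ((tendsto_ratio_aux a c hc).mul (tendsto_ratio_aux b c hc)).mul_const r
  simpa using this
lemma sqrt_mul_le_half {u v : ℝ} (hu : 0 ≤ u) (hv : 0 ≤ v) : Real.sqrt (u*v) ≤ (u+v)/2 := by
  rw [Real.sqrt_mul hu]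
  nlinarith [sq_nonneg (Real.sqrt u - Real.sqrt v), Real.sq_sqrt hu, Real.sq_sqrt hv,
    Real.sqrt_nonneg u, Real.sqrt_nonneg v]

/-- membership in the ellipse gives the normalized bound. -/
lemma ellipse_bound {θ : ℝ} (hθ : 1 < θ) {z : ℂ} (hz : z ∈ ellipseE θ) :
    Real.sqrt θ * ‖z-1‖ / (θ+1) + Real.sqrt θ * ‖z+1‖ / (θ+1) < 1 := by
  have hθ0 : (0:ℝ) < θ := by linarith
  have hθ1 : (0:ℝ) < θ + 1 := by linarith
  have hs : 0 < Real.sqrt θ := Real.sqrt_pos.mpr hθ0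
  have hs2 : Real.sqrt θ * Real.sqrt θ = θ := Real.mul_self_sqrt hθ0.le
  have h := hz
  rw [ellipseE, Set.mem_setOf_eq] at h
  have h2 : Real.sqrt θ * (‖z-1‖ + ‖z+1‖) <
      Real.sqrt θ * (Real.sqrt θ + (Real.sqrt θ)⁻¹) := by
    exact mul_lt_mul_of_pos_left h hs
  have h3 : Real.sqrt θ * (Real.sqrt θ + (Real.sqrt θ)⁻¹) = θ + 1 := by
    rw [mul_add, hs2, mul_inv_cancel₀ hs.ne']
  rw [← add_div, div_lt_one hθ1]
  rw [h3] at h2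
  nlinarith
lemma norm_gP (p : ℕ × ℕ) (z : ℂ) :
    ‖gP p z‖ = ‖z-1‖ ^ p.1 * ‖z+1‖ ^ p.2 := by
  rw [gP, norm_mul, norm_pow, norm_pow,
    norm_sub_rev 1 z, add_comm 1 z]

lemma aux_split (s t A C : ℝ) (h : s*s = t) :
    t*(A*C)/(t+1)^2 = (s*A/(t+1))*(s*C/(t+1)) := by
  subst h
  have h0 : (0:ℝ) < s*s+1 := by nlinarith [mul_self_nonneg s]
  have hne : s*s+1 ≠ 0 := h0.ne'
  field_simp

lemma sqrt_add_lt_one {x y x' y' : ℝ} (hx0 : 0 ≤ x) (hy0 : 0 ≤ y) (hx0' : 0 ≤ x')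
    (hy0' : 0 ≤ y') (h1 : x + y < 1) (h2 : x' + y' < 1) :
    Real.sqrt (x*x') + Real.sqrt (y*y') < 1 := by
  have ha := Real.sq_sqrt (mul_nonneg hx0 hx0')
  have hb := Real.sq_sqrt (mul_nonneg hy0 hy0')
  have hab : Real.sqrt (x*x') * Real.sqrt (y*y') = Real.sqrt ((x*y')*(x'*y)) := by
    rw [← Real.sqrt_mul (mul_nonneg hx0 hx0'), show x*x'*(y*y') = (x*y')*(x'*y) from by ring]
  have hAM : Real.sqrt (x*x') * Real.sqrt (y*y') ≤ (x*y' + x'*y)/2 := by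
    rw [hab]; exact sqrt_mul_le_half (mul_nonneg hx0 hy0') (mul_nonneg hx0' hy0)
  have hprod : (x+y)*(x'+y') < 1 := by nlinarith
  by_contra hcon
  push_neg at hcon
  have h3 : (1:ℝ) ≤ (Real.sqrt (x*x') + Real.sqrt (y*y'))^2 := by
    nlinarith [Real.sqrt_nonneg (x*x'), Real.sqrt_nonneg (y*y')]
  nlinarith

lemma norm_jkTerm_eq {θ α β : ℝ} (hθ : 1 < θ) (hα : -1 < α) (hβ : -1 < β) (z u : ℂ) (k l : ℕ) :
    ‖jkTerm θ α β z u (k,l)‖ = bCoef α β k l *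
      ((θ * (‖z-1‖ * ‖u-1‖) / (θ+1)^2)^k *
       (θ * (‖z+1‖ * ‖u+1‖) / (θ+1)^2)^l) := by
  rw [norm_jkTerm hθ hα hβ, norm_gP, norm_gP]
  show rT θ α β (k,l) * _ = _
  rw [rT]
  have hne : (θ+1) ≠ 0 := by positivity
  simp only
  rw [pow_mul (θ+1) 2 (k+l)]
  have hQ : ((θ+1)^2) ≠ 0 := by positivity
  rw [div_pow, div_pow, pow_add]
  field_simp
  ring

/-- The key pointwise bound for summability. -/
lemma key_pc_bound {α β μ X Y r T : ℝ} (hα : -1 < α) (hβ : -1 < β) (hμ1 : 0 < μ+1)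
    (hμα : μ ≤ α) (hμβ : μ ≤ β) (hμ0 : μ ≤ 0)
    (hX0 : 0 ≤ X) (hY0 : 0 ≤ Y) (hr0 : 0 < r)
    (hρr : Real.sqrt X + Real.sqrt Y ≤ r)
    (hT : ∀ n : ℕ, pc ((α+β)/2+1) n * pc ((α+β+3)/2) n / (pc (μ+1) n)^2 * r^n ≤ T)
    (k l : ℕ) :
    bCoef α β k l * (X^k * Y^l) ≤ T * (r^k * r^l) := by
  have hs1 : (0:ℝ) < (α+β)/2+1 := by linarith
  have hs2' : (0:ℝ) < (α+β+3)/2 := by linarith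
  have hbc := bCoef_le hα hβ hμ1 hμα hμβ hμ0 k l
  have hXY0 : 0 ≤ X^k * Y^l := mul_nonneg (pow_nonneg hX0 k) (pow_nonneg hY0 l)
  have hρ0 : 0 ≤ Real.sqrt X + Real.sqrt Y := by positivity
  have step2 : (((k+l).choose k : ℝ))^2 * (X^k * Y^l) ≤ ((Real.sqrt X + Real.sqrt Y)^(k+l))^2 := by
    have hXsq : X^k * Y^l = ((Real.sqrt X)^k * (Real.sqrt Y)^l)^2 := by
      rw [mul_pow, ← pow_mul, ← pow_mul, mul_comm k 2, mul_comm l 2, pow_mul, pow_mul,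
        Real.sq_sqrt hX0, Real.sq_sqrt hY0]
    have hsingle : (((k+l).choose k : ℝ)) * ((Real.sqrt X)^k * (Real.sqrt Y)^l) ≤
        (Real.sqrt X + Real.sqrt Y)^(k+l) := by
      have hmem : k ∈ Finset.range (k+l+1) := Finset.mem_range.mpr (by omega)
      have hexp := add_pow (Real.sqrt X) (Real.sqrt Y) (k+l)
      have hterm : ∀ i ∈ Finset.range (k+l+1),
          0 ≤ (Real.sqrt X)^i * (Real.sqrt Y)^(k+l-i) * (((k+l).choose i : ℝ)) := by
        intro i _; positivity
      have h5 := Finset.single_le_sum hterm hmem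
      rw [← hexp] at h5
      have hnk : k + l - k = l := by omega
      rw [hnk] at h5
      calc (((k+l).choose k : ℝ)) * ((Real.sqrt X)^k * (Real.sqrt Y)^l)
          = (Real.sqrt X)^k * (Real.sqrt Y)^l * (((k+l).choose k : ℝ)) := by ring
        _ ≤ _ := h5
    have hnn : 0 ≤ (((k+l).choose k : ℝ)) * ((Real.sqrt X)^k * (Real.sqrt Y)^l) := by positivity
    calc (((k+l).choose k : ℝ))^2 * (X^k * Y^l)
        = ((((k+l).choose k : ℝ)) * ((Real.sqrt X)^k * (Real.sqrt Y)^l))^2 := by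
          rw [hXsq]; ring
      _ ≤ ((Real.sqrt X + Real.sqrt Y)^(k+l))^2 := pow_le_pow_left₀ hnn hsingle 2
  have step3 : ((Real.sqrt X + Real.sqrt Y)^(k+l))^2 ≤ (r^(k+l))^2 :=
    pow_le_pow_left₀ (pow_nonneg hρ0 _) (pow_le_pow_left₀ hρ0 hρr (k+l)) 2
  have hG0 : 0 ≤ pc ((α+β)/2+1) (k+l) * pc ((α+β+3)/2) (k+l) / (pc (μ+1) (k+l))^2 :=
    div_nonneg (mul_nonneg (pc_pos hs1 _).le (pc_pos hs2' _).le)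
      (pow_nonneg (pc_pos hμ1 _).le 2)
  calc bCoef α β k l * (X^k * Y^l)
      ≤ (pc ((α+β)/2+1) (k+l) * pc ((α+β+3)/2) (k+l) / (pc (μ+1) (k+l))^2 *
          (((k+l).choose k : ℝ))^2) * (X^k * Y^l) := mul_le_mul_of_nonneg_right hbc hXY0
    _ = pc ((α+β)/2+1) (k+l) * pc ((α+β+3)/2) (k+l) / (pc (μ+1) (k+l))^2 *
        ((((k+l).choose k : ℝ))^2 * (X^k * Y^l)) := by ring
    _ ≤ pc ((α+β)/2+1) (k+l) * pc ((α+β+3)/2) (k+l) / (pc (μ+1) (k+l))^2 * ((r^(k+l))^2) :=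
        mul_le_mul_of_nonneg_left (step2.trans step3) hG0
    _ = (pc ((α+β)/2+1) (k+l) * pc ((α+β+3)/2) (k+l) / (pc (μ+1) (k+l))^2 * r^(k+l)) * r^(k+l) := by
        ring
    _ ≤ T * r^(k+l) := mul_le_mul_of_nonneg_right (hT (k+l)) (pow_nonneg hr0.le _)
    _ = T * (r^k * r^l) := by rw [pow_add]

lemma summable_norm_jkTerm {θ α β : ℝ} (hθ : 1 < θ) (hα : -1 < α) (hβ : -1 < β)
    {z u : ℂ} (hz : z ∈ ellipseE θ) (hu : u ∈ ellipseE θ) :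
    Summable fun p : ℕ × ℕ => ‖jkTerm θ α β z u p‖ := by
  have hθ0 : (0:ℝ) < θ := by linarith
  have hθ1 : (0:ℝ) < θ + 1 := by linarith
  have hs : 0 < Real.sqrt θ := Real.sqrt_pos.mpr hθ0
  have hs2 : Real.sqrt θ * Real.sqrt θ = θ := Real.mul_self_sqrt hθ0.le
  have hXx : θ * (‖z-1‖ * ‖u-1‖) / (θ+1)^2 =
      (Real.sqrt θ * ‖z-1‖ / (θ+1)) * (Real.sqrt θ * ‖u-1‖ / (θ+1)) := by
    exact aux_split _ _ _ _ hs2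
  have hYy : θ * (‖z+1‖ * ‖u+1‖) / (θ+1)^2 =
      (Real.sqrt θ * ‖z+1‖ / (θ+1)) * (Real.sqrt θ * ‖u+1‖ / (θ+1)) := by
    exact aux_split _ _ _ _ hs2
  have hX0 : 0 ≤ θ * (‖z-1‖ * ‖u-1‖) / (θ+1)^2 := by positivity
  have hY0 : 0 ≤ θ * (‖z+1‖ * ‖u+1‖) / (θ+1)^2 := by positivity
  have hρ1 : Real.sqrt (θ * (‖z-1‖ * ‖u-1‖) / (θ+1)^2) +
      Real.sqrt (θ * (‖z+1‖ * ‖u+1‖) / (θ+1)^2) < 1 := by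
    rw [hXx, hYy]
    exact sqrt_add_lt_one (by positivity) (by positivity) (by positivity) (by positivity)
      (ellipse_bound hθ hz) (ellipse_bound hθ hu)
  set r := max (Real.sqrt (θ * (‖z-1‖ * ‖u-1‖) / (θ+1)^2) +
      Real.sqrt (θ * (‖z+1‖ * ‖u+1‖) / (θ+1)^2)) (1/2) with hrdef
  have hr0 : (0:ℝ) < r := lt_max_of_lt_right (by norm_num)
  have hr1 : r < 1 := max_lt hρ1 (by norm_num)
  have hρr := le_max_left (Real.sqrt (θ * (‖z-1‖ * ‖u-1‖) / (θ+1)^2) +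
      Real.sqrt (θ * (‖z+1‖ * ‖u+1‖) / (θ+1)^2)) (1/2)
  have hμ1 : 0 < min (min α β) 0 + 1 := by
    have : -1 < min (min α β) 0 := by
      simp only [lt_min_iff]
      exact ⟨⟨hα, hβ⟩, by norm_num⟩
    linarith
  have hs1 : (0:ℝ) < (α+β)/2+1 := by linarith
  have hs2' : (0:ℝ) < (α+β+3)/2 := by linarith
  have hsumm := summable_pc_ratio_geom hs1 hs2' hμ1 hr0 hr1
  have hterm_nonneg : ∀ n : ℕ,
      0 ≤ pc ((α+β)/2+1) n * pc ((α+β+3)/2) n / (pc (min (min α β) 0+1) n)^2 * r^n :=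
    fun n => mul_nonneg (div_nonneg (mul_nonneg (pc_pos hs1 n).le (pc_pos hs2' n).le)
      (pow_nonneg (pc_pos hμ1 n).le 2)) (pow_nonneg hr0.le n)
  have hT := fun n => Summable.le_tsum hsumm n (fun m _ => hterm_nonneg m)
  have key : ∀ p : ℕ × ℕ, ‖jkTerm θ α β z u p‖ ≤
      (∑' n : ℕ, pc ((α+β)/2+1) n * pc ((α+β+3)/2) n / (pc (min (min α β) 0+1) n)^2 * r^n) *
        (r^p.1 * r^p.2) := by
    rintro ⟨k, l⟩
    rw [norm_jkTerm_eq hθ hα hβ z u k l]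
    exact key_pc_bound hα hβ hμ1 ((min_le_left _ _).trans (min_le_left _ _))
      ((min_le_left _ _).trans (min_le_right _ _)) (min_le_right _ _)
      hX0 hY0 hr0 hρr hT k l
  have hgeo := summable_geometric_of_lt_one hr0.le hr1
  exact Summable.of_nonneg_of_le (fun p => norm_nonneg _) key
    ((hgeo.mul_of_nonneg hgeo (fun i => pow_nonneg hr0.le i)
      (fun i => pow_nonneg hr0.le i)).mul_left _)
lemma pc_quad_bounded {a1 a2 a3 a4 b1 b2 b3 b4 : ℝ} (ha1 : 0 < a1) (ha2 : 0 < a2)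
    (ha3 : 0 < a3) (ha4 : 0 < a4) (hb1 : 0 < b1) (hb2 : 0 < b2) (hb3 : 0 < b3) (hb4 : 0 < b4)
    (hsum : a1 + a2 + a3 + a4 = b1 + b2 + b3 + b4) :
    ∃ C : ℝ, 0 < C ∧ ∀ n, pc a1 n * pc a2 n * pc a3 n * pc a4 n ≤
      C * (pc b1 n * pc b2 n * pc b3 n * pc b4 n) := by
  obtain ⟨m, hm0, hmb1, hmb2, hmb3, hmb4⟩ : ∃ m : ℝ, 0 < m ∧ m ≤ b1 ∧ m ≤ b2 ∧ m ≤ b3 ∧ m ≤ b4 :=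
    ⟨min (min b1 b2) (min b3 b4), lt_min (lt_min hb1 hb2) (lt_min hb3 hb4),
      (min_le_left _ _).trans (min_le_left _ _), (min_le_left _ _).trans (min_le_right _ _),
      (min_le_right _ _).trans (min_le_left _ _), (min_le_right _ _).trans (min_le_right _ _)⟩
  obtain ⟨t, ht1, htm⟩ : ∃ t : ℝ, 1 ≤ t ∧ 1/m ≤ t := ⟨max 1 (1/m), le_max_left _ _, le_max_right _ _⟩
  have ht0 : (0:ℝ) < t := lt_of_lt_of_le one_pos ht1
  obtain ⟨A, hA0, hA1, hA2, hA3⟩ : ∃ A : ℝ, 0 ≤ A ∧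
      (a1*a2+a1*a3+a1*a4+a2*a3+a2*a4+a3*a4) - (b1*b2+b1*b3+b1*b4+b2*b3+b2*b4+b3*b4) ≤ A ∧
      (a1*a2*a3+a1*a2*a4+a1*a3*a4+a2*a3*a4) - (b1*b2*b3+b1*b2*b4+b1*b3*b4+b2*b3*b4) ≤ A ∧
      a1*a2*a3*a4 - b1*b2*b3*b4 ≤ A := by
    refine ⟨|(a1*a2+a1*a3+a1*a4+a2*a3+a2*a4+a3*a4) - (b1*b2+b1*b3+b1*b4+b2*b3+b2*b4+b3*b4)| +
      |(a1*a2*a3+a1*a2*a4+a1*a3*a4+a2*a3*a4) - (b1*b2*b3+b1*b2*b4+b1*b3*b4+b2*b3*b4)| +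
      |a1*a2*a3*a4 - b1*b2*b3*b4|, by positivity, ?_, ?_, ?_⟩ <;>
    · have l1 := le_abs_self ((a1*a2+a1*a3+a1*a4+a2*a3+a2*a4+a3*a4) - (b1*b2+b1*b3+b1*b4+b2*b3+b2*b4+b3*b4))
      have l2 := le_abs_self ((a1*a2*a3+a1*a2*a4+a1*a3*a4+a2*a3*a4) - (b1*b2*b3+b1*b2*b4+b1*b3*b4+b2*b3*b4))
      have l3 := le_abs_self (a1*a2*a3*a4 - b1*b2*b3*b4)
      have n1 := abs_nonneg ((a1*a2+a1*a3+a1*a4+a2*a3+a2*a4+a3*a4) - (b1*b2+b1*b3+b1*b4+b2*b3+b2*b4+b3*b4))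
      have n2 := abs_nonneg ((a1*a2*a3+a1*a2*a4+a1*a3*a4+a2*a3*a4) - (b1*b2*b3+b1*b2*b4+b1*b3*b4+b2*b3*b4))
      have n3 := abs_nonneg (a1*a2*a3*a4 - b1*b2*b3*b4)
      linarith
  set K : ℝ := A * t^4 with hK
  have hK0 : 0 ≤ K := by positivity
  have step : ∀ j : ℕ, (a1+j)*(a2+j)*(a3+j)*(a4+j) ≤
      (1 + K/((j:ℝ)+1)^2) * ((b1+j)*(b2+j)*(b3+j)*(b4+j)) := by
    intro j
    have hx0 : (0:ℝ) ≤ (j:ℝ) := Nat.cast_nonneg j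
    set x : ℝ := (j:ℝ) with hx
    have hb1x : 0 < b1 + x := by positivity
    have hb2x : 0 < b2 + x := by positivity
    have hb3x : 0 < b3 + x := by positivity
    have hb4x : 0 < b4 + x := by positivity
    have hcl1 : ∀ b : ℝ, m ≤ b → x + 1 ≤ t*(b+x) := by
      intro b hb
      have h1 : 1 ≤ (1/m)*b := by rw [one_div, inv_mul_eq_div, le_div_iff₀ hm0]; linarith
      have h2 : (1/m)*b ≤ t*b := mul_le_mul_of_nonneg_right htm (hm0.trans_le hb).le
      nlinarith
    have c1 : x + 1 ≤ t*(b1+x) := hcl1 b1 hmb1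
    have c2 : x + 1 ≤ t*(b2+x) := hcl1 b2 hmb2
    have c3 : x + 1 ≤ t*(b3+x) := hcl1 b3 hmb3
    have c4 : x + 1 ≤ t*(b4+x) := hcl1 b4 hmb4
    have quart : (x+1)^4 ≤ t^4 * ((b1+x)*(b2+x)*(b3+x)*(b4+x)) := by
      have h12 : (x+1)*(x+1) ≤ (t*(b1+x))*(t*(b2+x)) :=
        mul_le_mul c1 c2 (by linarith) (by positivity)
      have h34 : (x+1)*(x+1) ≤ (t*(b3+x))*(t*(b4+x)) :=
        mul_le_mul c3 c4 (by linarith) (by positivity)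
      have h1234 : ((x+1)*(x+1))*((x+1)*(x+1)) ≤
          ((t*(b1+x))*(t*(b2+x)))*((t*(b3+x))*(t*(b4+x))) :=
        mul_le_mul h12 h34 (by positivity) (by positivity)
      nlinarith [h1234]
    have diff : (a1+x)*(a2+x)*(a3+x)*(a4+x) - (b1+x)*(b2+x)*(b3+x)*(b4+x) ≤ A*(x+1)^2 := by
      have e1 : (a1+x)*(a2+x)*(a3+x)*(a4+x) - (b1+x)*(b2+x)*(b3+x)*(b4+x)
          = ((a1*a2+a1*a3+a1*a4+a2*a3+a2*a4+a3*a4) - (b1*b2+b1*b3+b1*b4+b2*b3+b2*b4+b3*b4))*x^2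
            + ((a1*a2*a3+a1*a2*a4+a1*a3*a4+a2*a3*a4) - (b1*b2*b3+b1*b2*b4+b1*b3*b4+b2*b3*b4))*x
            + (a1*a2*a3*a4 - b1*b2*b3*b4) := by
        linear_combination x^3 * hsum
      rw [e1]
      have q1 := mul_le_mul_of_nonneg_right hA1 (sq_nonneg x)
      have q2 := mul_le_mul_of_nonneg_right hA2 hx0
      nlinarith [sq_nonneg x]
    have key : A*(x+1)^2 ≤ K/(x+1)^2 * ((b1+x)*(b2+x)*(b3+x)*(b4+x)) := by
      rw [div_mul_eq_mul_div, le_div_iff₀ (by positivity)]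
      calc A*(x+1)^2 * (x+1)^2 = A * (x+1)^4 := by ring
      _ ≤ A * (t^4 * ((b1+x)*(b2+x)*(b3+x)*(b4+x))) := mul_le_mul_of_nonneg_left quart hA0
      _ = K * ((b1+x)*(b2+x)*(b3+x)*(b4+x)) := by rw [hK]; ring
    have expand : (1 + K/(x+1)^2) * ((b1+x)*(b2+x)*(b3+x)*(b4+x))
        = (b1+x)*(b2+x)*(b3+x)*(b4+x) + K/(x+1)^2 * ((b1+x)*(b2+x)*(b3+x)*(b4+x)) := by ring
    rw [expand]
    linarith
  refine ⟨Real.exp (3*K), Real.exp_pos _, ?_⟩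
  have main : ∀ n, pc a1 n * pc a2 n * pc a3 n * pc a4 n ≤
      Real.exp (K * ∑ j ∈ Finset.range n, 1/((j:ℝ)+1)^2) *
        (pc b1 n * pc b2 n * pc b3 n * pc b4 n) := by
    intro n
    induction n with
    | zero => simp [pc_zero]
    | succ n ih =>
      rw [Finset.sum_range_succ, pc_succ, pc_succ, pc_succ, pc_succ, pc_succ, pc_succ,
        pc_succ, pc_succ]
      have hPb : 0 < pc b1 n * pc b2 n * pc b3 n * pc b4 n :=
        mul_pos (mul_pos (mul_pos (pc_pos hb1 n) (pc_pos hb2 n)) (pc_pos hb3 n)) (pc_pos hb4 n)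
      have hN0 : 0 ≤ (a1+(n:ℝ))*(a2+n)*(a3+n)*(a4+n) := by positivity
      have hE : 0 < Real.exp (K * ∑ j ∈ Finset.range n, 1/((j:ℝ)+1)^2) := Real.exp_pos _
      calc pc a1 n * (a1+n) * (pc a2 n * (a2+n)) * (pc a3 n * (a3+n)) * (pc a4 n * (a4+n))
          = (pc a1 n * pc a2 n * pc a3 n * pc a4 n) * ((a1+(n:ℝ))*(a2+n)*(a3+n)*(a4+n)) := by
            ring
        _ ≤ (Real.exp (K * ∑ j ∈ Finset.range n, 1/((j:ℝ)+1)^2) *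
              (pc b1 n * pc b2 n * pc b3 n * pc b4 n)) *
            ((1 + K/((n:ℝ)+1)^2) * ((b1+n)*(b2+n)*(b3+n)*(b4+n))) :=
            mul_le_mul ih (step n) hN0 (by positivity)
        _ ≤ (Real.exp (K * ∑ j ∈ Finset.range n, 1/((j:ℝ)+1)^2) *
              (pc b1 n * pc b2 n * pc b3 n * pc b4 n)) *
            (Real.exp (K * (1/((n:ℝ)+1)^2)) * ((b1+n)*(b2+n)*(b3+n)*(b4+n))) := by
            have h1 : 1 + K/((n:ℝ)+1)^2 ≤ Real.exp (K * (1/((n:ℝ)+1)^2)) := by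
              have h3 := Real.add_one_le_exp (K * (1/((n:ℝ)+1)^2))
              have h2 : K/((n:ℝ)+1)^2 = K * (1/((n:ℝ)+1)^2) := by ring
              linarith
            have hb : (0:ℝ) ≤ (b1+(n:ℝ))*(b2+n)*(b3+n)*(b4+n) := by positivity
            have h4 := mul_le_mul_of_nonneg_right h1 hb
            exact mul_le_mul_of_nonneg_left h4 (mul_pos hE hPb).le
        _ = Real.exp (K * (∑ j ∈ Finset.range n, 1/((j:ℝ)+1)^2 + 1/((n:ℝ)+1)^2)) *
            ((pc b1 n * (b1+n)) * (pc b2 n * (b2+n)) * (pc b3 n * (b3+n)) * (pc b4 n * (b4+n))) := by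
            have heq : Real.exp (K * (∑ j ∈ Finset.range n, 1/((j:ℝ)+1)^2 + 1/((n:ℝ)+1)^2))
                = Real.exp (K * ∑ j ∈ Finset.range n, 1/((j:ℝ)+1)^2) *
                  Real.exp (K * (1/((n:ℝ)+1)^2)) := by
              rw [mul_add, Real.exp_add]
            rw [heq]; ring
  intro n
  refine (main n).trans (mul_le_mul_of_nonneg_right ?_
    (mul_pos (mul_pos (mul_pos (pc_pos hb1 n) (pc_pos hb2 n)) (pc_pos hb3 n)) (pc_pos hb4 n)).le)
  apply Real.exp_le_exp.mpr
  have h6 := sum_inv_sq_le n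
  have hinv : 0 < 2/((n:ℝ)+1) := by positivity
  nlinarith
/-- monotone comparison of `bCoef` coefficients: raising parameters decreases `bCoef`
up to a uniform constant. -/
lemma bCoef_compare {α β α' β' : ℝ} (hα : -1 < α) (hβ : -1 < β) (hαα' : α ≤ α') (hββ' : β ≤ β') :
    ∃ C : ℝ, 0 < C ∧ ∀ k l, bCoef α β k l ≤ C * bCoef α' β' k l := by
  have hα' : -1 < α' := lt_of_lt_of_le hα hαα'
  have hβ' : -1 < β' := lt_of_lt_of_le hβ hββ'
  have hs1 : (0:ℝ) < (α+β)/2+1 := by linarith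
  have hs2 : (0:ℝ) < (α+β+3)/2 := by linarith
  have hs1' : (0:ℝ) < (α'+β')/2+1 := by linarith
  have hs2' : (0:ℝ) < (α'+β'+3)/2 := by linarith
  have hα1 : (0:ℝ) < α+1 := by linarith
  have hβ1 : (0:ℝ) < β+1 := by linarith
  have hα1' : (0:ℝ) < α'+1 := by linarith
  have hβ1' : (0:ℝ) < β'+1 := by linarith
  obtain ⟨C, hC0, hC⟩ := pc_quad_bounded hs1 hs2 hα1' hβ1' hs1' hs2' hα1 hβ1
    (by ring)
  refine ⟨C, hC0, fun k l => ?_⟩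
  set n := k + l with hn
  have hkn : k ≤ n := Nat.le_add_right k l
  have hln : l ≤ n := Nat.le_add_left l k
  -- positive quantities
  have p1 := pc_pos hs1 n; have p2 := pc_pos hs2 n
  have p1' := pc_pos hs1' n; have p2' := pc_pos hs2' n
  have pα := pc_pos hα1 n; have pβ := pc_pos hβ1 n
  have pα' := pc_pos hα1' n; have pβ' := pc_pos hβ1' n
  have pαk := pc_pos hα1 k; have pβl := pc_pos hβ1 l
  have pαk' := pc_pos hα1' k; have pβl' := pc_pos hβ1' l
  have hkf : (0:ℝ) < k.factorial := by positivity
  have hlf : (0:ℝ) < l.factorial := by positivity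
  have hD : (0:ℝ) < pc (α+1) k * pc (β+1) l * k.factorial * l.factorial := by positivity
  have hD' : (0:ℝ) < pc (α'+1) k * pc (β'+1) l * k.factorial * l.factorial := by positivity
  rw [bCoef_eq, bCoef_eq, mul_div_assoc', div_le_div_iff₀ hD hD']
  -- target: pc s1 n * pc s2 n * (pc (α+1) k …) form; prove after multiplying by pα*pβ
  rw [← mul_le_mul_iff_of_pos_right (mul_pos pα pβ)]
  have i1 : pc (α'+1) k * pc (α+1) n ≤ pc (α+1) k * pc (α'+1) n :=
    pc_ratio_mono hα1 (by linarith) hkn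
  have i2 : pc (β'+1) l * pc (β+1) n ≤ pc (β+1) l * pc (β'+1) n :=
    pc_ratio_mono hβ1 (by linarith) hln
  have i12 : (pc (α'+1) k * pc (α+1) n) * (pc (β'+1) l * pc (β+1) n) ≤
      (pc (α+1) k * pc (α'+1) n) * (pc (β+1) l * pc (β'+1) n) :=
    mul_le_mul i1 i2 (by positivity) (by positivity)
  have hquad := hC n
  calc pc ((α+β)/2+1) n * pc ((α+β+3)/2) n *
        (pc (α'+1) k * pc (β'+1) l * k.factorial * l.factorial) * (pc (α+1) n * pc (β+1) n)
      = (pc ((α+β)/2+1) n * pc ((α+β+3)/2) n * k.factorial * l.factorial) *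
        ((pc (α'+1) k * pc (α+1) n) * (pc (β'+1) l * pc (β+1) n)) := by ring
    _ ≤ (pc ((α+β)/2+1) n * pc ((α+β+3)/2) n * k.factorial * l.factorial) *
        ((pc (α+1) k * pc (α'+1) n) * (pc (β+1) l * pc (β'+1) n)) := by
        apply mul_le_mul_of_nonneg_left i12 (by positivity)
    _ = (pc ((α+β)/2+1) n * pc ((α+β+3)/2) n * pc (α'+1) n * pc (β'+1) n) *
        (k.factorial * l.factorial * pc (α+1) k * pc (β+1) l) := by ring
    _ ≤ (C * (pc ((α'+β')/2+1) n * pc ((α'+β'+3)/2) n * pc (α+1) n * pc (β+1) n)) *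
        (k.factorial * l.factorial * pc (α+1) k * pc (β+1) l) := by
        apply mul_le_mul_of_nonneg_right hquad (by positivity)
    _ = C * (pc ((α'+β')/2+1) n * pc ((α'+β'+3)/2) n) *
        (pc (α+1) k * pc (β+1) l * k.factorial * l.factorial) * (pc (α+1) n * pc (β+1) n) := by
        ring
lemma tauConst_pos {α β : ℝ} (hα : -1 < α) (hβ : -1 < β) : 0 < tauConst α β := by
  unfold tauConst
  have h1 : 0 < Real.Gamma (α+1) := Real.Gamma_pos_of_pos (by linarith)
  have h2 : 0 < Real.Gamma (β+1) := Real.Gamma_pos_of_pos (by linarith)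
  have h3 : 0 < Real.Gamma (α+β+2) := Real.Gamma_pos_of_pos (by linarith)
  have h4 : (0:ℝ) < 2 ^ (α+β+1) := Real.rpow_pos_of_pos (by norm_num) _
  positivity

lemma cConst_pos {θ α β : ℝ} (hθ : 1 < θ) (hα : -1 < α) (hβ : -1 < β) : 0 < cConst θ α β := by
  unfold cConst
  have h1 : (0:ℝ) < θ ^ (α+β+1) := Real.rpow_pos_of_pos (by linarith) _
  have h2 : (0:ℝ) < (θ+1) ^ (α+β+2) := Real.rpow_pos_of_pos (by linarith) _
  have h3 := tauConst_pos hα hβ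
  have h4 : (0:ℝ) < θ - 1 := by linarith
  positivity

lemma qf_summable {θ α β : ℝ} (hθ : 1 < θ) (hα : -1 < α) (hβ : -1 < β) {n : ℕ}
    {z : Fin n → ℂ} (hz : ∀ i, z i ∈ ellipseE θ) (c : Fin n → ℂ) :
    Summable fun p : ℕ × ℕ => rT θ α β p * Complex.normSq (∑ i : Fin n, c i * gP p (z i)) := by
  have hmaj : Summable fun p : ℕ × ℕ =>
      ∑ i : Fin n, ∑ j : Fin n, ‖c i‖ * ‖c j‖ * ‖jkTerm θ α β (z i) (z j) p‖ :=
    summable_sum (fun i _ => summable_sum (fun j _ =>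
      (summable_norm_jkTerm hθ hα hβ (hz i) (hz j)).mul_left _))
  refine Summable.of_nonneg_of_le (fun p => mul_nonneg (rT_pos hθ hα hβ p).le
    (Complex.normSq_nonneg _)) (fun p => ?_) hmaj
  have h1 : ‖∑ i : Fin n, c i * gP p (z i)‖ ≤ ∑ i : Fin n, ‖c i‖ * ‖gP p (z i)‖ :=
    (norm_sum_le _ _).trans_eq (Finset.sum_congr rfl fun i _ => norm_mul _ _)
  have h2 : Complex.normSq (∑ i : Fin n, c i * gP p (z i)) =
      ‖∑ i : Fin n, c i * gP p (z i)‖^2 := by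
    rw [Complex.normSq_eq_norm_sq]
  calc rT θ α β p * Complex.normSq (∑ i : Fin n, c i * gP p (z i))
      ≤ rT θ α β p * (∑ i : Fin n, ‖c i‖ * ‖gP p (z i)‖)^2 := by
        rw [h2]
        exact mul_le_mul_of_nonneg_left (pow_le_pow_left₀ (norm_nonneg _) h1 2)
          (rT_pos hθ hα hβ p).le
    _ = ∑ i : Fin n, ∑ j : Fin n, ‖c i‖ * ‖c j‖ * ‖jkTerm θ α β (z i) (z j) p‖ := by
        rw [sq, Finset.sum_mul_sum, Finset.mul_sum]
        refine Finset.sum_congr rfl fun i _ => ?_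
        rw [Finset.mul_sum]
        refine Finset.sum_congr rfl fun j _ => ?_
        rw [norm_jkTerm hθ hα hβ]
        ring

lemma qf_eq {θ α β : ℝ} (hθ : 1 < θ) (hα : -1 < α) (hβ : -1 < β) {n : ℕ}
    (z : Fin n → ℂ) (c : Fin n → ℂ) (hz : ∀ i, z i ∈ ellipseE θ) :
    (∑ i : Fin n, ∑ j : Fin n, jkK θ α β (z i) (z j) * c i * (starRingEnd ℂ) (c j)) =
    (((cConst θ α β * ∑' p : ℕ × ℕ,
      rT θ α β p * Complex.normSq (∑ i : Fin n, c i * gP p (z i)) : ℝ)) : ℂ) := by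
  have hsumij : ∀ i j : Fin n, Summable (fun p : ℕ × ℕ =>
      jkTerm θ α β (z i) (z j) p * (c i * (starRingEnd ℂ) (c j))) := fun i j =>
    ((summable_norm_jkTerm hθ hα hβ (hz i) (hz j)).of_norm).mul_right _
  have step1 : ∀ i j : Fin n, jkK θ α β (z i) (z j) * c i * (starRingEnd ℂ) (c j) =
      ((cConst θ α β : ℝ) : ℂ) *
        ∑' p : ℕ × ℕ, jkTerm θ α β (z i) (z j) p * (c i * (starRingEnd ℂ) (c j)) := by
    intro i j
    rw [jkK, tsum_mul_right]
    ring
  calc ∑ i : Fin n, ∑ j : Fin n, jkK θ α β (z i) (z j) * c i * (starRingEnd ℂ) (c j)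
      = ((cConst θ α β : ℝ) : ℂ) * ∑ i : Fin n, ∑ j : Fin n,
          ∑' p : ℕ × ℕ, jkTerm θ α β (z i) (z j) p * (c i * (starRingEnd ℂ) (c j)) := by
        rw [Finset.mul_sum]
        refine Finset.sum_congr rfl fun i _ => ?_
        rw [Finset.mul_sum]
        exact Finset.sum_congr rfl fun j _ => step1 i j
    _ = ((cConst θ α β : ℝ) : ℂ) * ∑' p : ℕ × ℕ, ∑ i : Fin n, ∑ j : Fin n,
          jkTerm θ α β (z i) (z j) p * (c i * (starRingEnd ℂ) (c j)) := by
        congr 1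
        rw [Summable.tsum_finsetSum (fun i _ => summable_sum (fun j _ => hsumij i j))]
        refine Finset.sum_congr rfl fun i _ => ?_
        rw [Summable.tsum_finsetSum (fun j _ => hsumij i j)]
    _ = ((cConst θ α β : ℝ) : ℂ) * ∑' p : ℕ × ℕ,
          ((rT θ α β p * Complex.normSq (∑ i : Fin n, c i * gP p (z i)) : ℝ) : ℂ) := by
        congr 1
        refine tsum_congr fun p => ?_
        have e1 : ∀ i j : Fin n, jkTerm θ α β (z i) (z j) p * (c i * (starRingEnd ℂ) (c j)) =
            ((rT θ α β p : ℝ) : ℂ) * (c i * gP p (z i)) *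
              (starRingEnd ℂ) (c j * gP p (z j)) := by
          intro i j
          rw [jkTerm_eq, map_mul]
          ring
        calc ∑ i : Fin n, ∑ j : Fin n, jkTerm θ α β (z i) (z j) p * (c i * (starRingEnd ℂ) (c j))
            = ∑ i : Fin n, ∑ j : Fin n, ((rT θ α β p : ℝ) : ℂ) * (c i * gP p (z i)) *
                (starRingEnd ℂ) (c j * gP p (z j)) :=
              Finset.sum_congr rfl fun i _ => Finset.sum_congr rfl fun j _ => e1 i j
          _ = ((rT θ α β p : ℝ) : ℂ) * ((∑ i : Fin n, c i * gP p (z i)) *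
                (starRingEnd ℂ) (∑ j : Fin n, c j * gP p (z j))) := by
              rw [map_sum, Finset.sum_mul_sum, Finset.mul_sum]
              refine Finset.sum_congr rfl fun i _ => ?_
              rw [Finset.mul_sum]
              exact Finset.sum_congr rfl fun j _ => by ring
          _ = ((rT θ α β p * Complex.normSq (∑ i : Fin n, c i * gP p (z i)) : ℝ) : ℂ) := by
              rw [Complex.mul_conj]
              push_cast
              ring
    _ = (((cConst θ α β * ∑' p : ℕ × ℕ,
          rT θ α β p * Complex.normSq (∑ i : Fin n, c i * gP p (z i)) : ℝ)) : ℂ) := by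
        rw [Complex.ofReal_mul, Complex.ofReal_tsum]

lemma rT_le_of_bCoef_le {θ α β γ δ C : ℝ} (hθ : 1 < θ)
    (hb : ∀ k l, bCoef α β k l ≤ C * bCoef γ δ k l) (p : ℕ × ℕ) :
    rT θ α β p ≤ C * rT θ γ δ p := by
  have hθ0 : (0:ℝ) < θ := by linarith
  have hθ1 : (0:ℝ) < θ + 1 := by linarith
  calc rT θ α β p = bCoef α β p.1 p.2 * θ ^ (p.1+p.2) / (θ+1)^(2*(p.1+p.2)) := rfl
    _ ≤ (C * bCoef γ δ p.1 p.2) * θ ^ (p.1+p.2) / (θ+1)^(2*(p.1+p.2)) := by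
        apply div_le_div_of_nonneg_right ?_ (by positivity)
        exact mul_le_mul_of_nonneg_right (hb p.1 p.2) (by positivity)
    _ = C * rT θ γ δ p := by rw [rT]; ring

theorem jacobi_kernels_comparable (θ α β : ℝ) (hθ : 1 < θ) (hα : -1 < α) (hβ : -1 < β) :
    (∀ z ∈ ellipseE θ, ∀ u ∈ ellipseE θ,
        Summable fun p : ℕ × ℕ => ‖jkTerm θ α β z u p‖) ∧
    (∀ γ : ℝ, max α β < γ → ∃ M : ℝ, 0 < M ∧
      ∀ (n : ℕ) (z : Fin n → ℂ) (c : Fin n → ℂ), (∀ i, z i ∈ ellipseE θ) →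
        0 ≤ (∑ i : Fin n, ∑ j : Fin n, jkK θ α β (z i) (z j) * c i * (starRingEnd ℂ) (c j)).re ∧
        (∑ i : Fin n, ∑ j : Fin n, jkK θ α β (z i) (z j) * c i * (starRingEnd ℂ) (c j)).im = 0 ∧
        (∑ i : Fin n, ∑ j : Fin n, jkK θ α β (z i) (z j) * c i * (starRingEnd ℂ) (c j)).re ≤
          M * (∑ i : Fin n, ∑ j : Fin n,
            jkK θ γ γ (z i) (z j) * c i * (starRingEnd ℂ) (c j)).re) ∧
    ∀ η : ℝ, -1 < η → η < min α β → ∃ m : ℝ, 0 < m ∧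
      ∀ (n : ℕ) (z : Fin n → ℂ) (c : Fin n → ℂ), (∀ i, z i ∈ ellipseE θ) →
        m * (∑ i : Fin n, ∑ j : Fin n,
            jkK θ η η (z i) (z j) * c i * (starRingEnd ℂ) (c j)).re ≤
          (∑ i : Fin n, ∑ j : Fin n,
            jkK θ α β (z i) (z j) * c i * (starRingEnd ℂ) (c j)).re := by
  refine ⟨fun z hz u hu => summable_norm_jkTerm hθ hα hβ hz hu, ?_, ?_⟩
  · -- upper comparison
    intro γ hγ
    have hαγ : α ≤ γ := (le_max_left α β).trans hγ.le
    have hβγ : β ≤ γ := (le_max_right α β).trans hγ.le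
    have hγ1 : -1 < γ := lt_of_lt_of_le hα hαγ
    obtain ⟨C, hC0, hC⟩ := bCoef_compare hα hβ hαγ hβγ
    have hcαβ := cConst_pos hθ hα hβ
    have hcγ := cConst_pos hθ hγ1 hγ1
    refine ⟨cConst θ α β * C / cConst θ γ γ, by positivity, ?_⟩
    intro n z c hz
    rw [qf_eq hθ hα hβ z c hz, qf_eq hθ hγ1 hγ1 z c hz]
    simp only [Complex.ofReal_re, Complex.ofReal_im]
    have hsαβ := qf_summable hθ hα hβ hz c
    have hsγ := qf_summable hθ hγ1 hγ1 hz c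
    have htnn : 0 ≤ ∑' p : ℕ × ℕ,
        rT θ α β p * Complex.normSq (∑ i : Fin n, c i * gP p (z i)) :=
      tsum_nonneg fun p => mul_nonneg (rT_pos hθ hα hβ p).le (Complex.normSq_nonneg _)
    refine ⟨mul_nonneg hcαβ.le htnn, trivial, ?_⟩
    have hterm : ∀ p : ℕ × ℕ,
        rT θ α β p * Complex.normSq (∑ i : Fin n, c i * gP p (z i)) ≤
        C * (rT θ γ γ p * Complex.normSq (∑ i : Fin n, c i * gP p (z i))) := by
      intro p
      have h1 := mul_le_mul_of_nonneg_right (rT_le_of_bCoef_le hθ hC p)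
        (Complex.normSq_nonneg (∑ i : Fin n, c i * gP p (z i)))
      calc rT θ α β p * Complex.normSq (∑ i : Fin n, c i * gP p (z i))
          ≤ C * rT θ γ γ p * Complex.normSq (∑ i : Fin n, c i * gP p (z i)) := h1
        _ = C * (rT θ γ γ p * Complex.normSq (∑ i : Fin n, c i * gP p (z i))) := by ring
    have htle := Summable.tsum_le_tsum hterm hsαβ (hsγ.mul_left C)
    rw [tsum_mul_left] at htle
    calc cConst θ α β * ∑' p : ℕ × ℕ,
          rT θ α β p * Complex.normSq (∑ i : Fin n, c i * gP p (z i))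
        ≤ cConst θ α β * (C * ∑' p : ℕ × ℕ,
            rT θ γ γ p * Complex.normSq (∑ i : Fin n, c i * gP p (z i))) :=
          mul_le_mul_of_nonneg_left htle hcαβ.le
      _ = cConst θ α β * C / cConst θ γ γ * (cConst θ γ γ * ∑' p : ℕ × ℕ,
            rT θ γ γ p * Complex.normSq (∑ i : Fin n, c i * gP p (z i))) := by
          field_simp
  · -- lower comparison
    intro η hη1 hηmin
    have hηα : η ≤ α := ((lt_min_iff.mp hηmin).1).le
    have hηβ : η ≤ β := ((lt_min_iff.mp hηmin).2).le
    obtain ⟨C, hC0, hC⟩ := bCoef_compare hη1 hη1 hηα hηβ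
    have hcαβ := cConst_pos hθ hα hβ
    have hcη := cConst_pos hθ hη1 hη1
    refine ⟨cConst θ α β / (C * cConst θ η η), by positivity, ?_⟩
    intro n z c hz
    rw [qf_eq hθ hα hβ z c hz, qf_eq hθ hη1 hη1 z c hz]
    simp only [Complex.ofReal_re]
    have hsαβ := qf_summable hθ hα hβ hz c
    have hsη := qf_summable hθ hη1 hη1 hz c
    have hterm : ∀ p : ℕ × ℕ,
        rT θ η η p * Complex.normSq (∑ i : Fin n, c i * gP p (z i)) ≤
        C * (rT θ α β p * Complex.normSq (∑ i : Fin n, c i * gP p (z i))) := by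
      intro p
      have h1 := mul_le_mul_of_nonneg_right (rT_le_of_bCoef_le hθ hC p)
        (Complex.normSq_nonneg (∑ i : Fin n, c i * gP p (z i)))
      calc rT θ η η p * Complex.normSq (∑ i : Fin n, c i * gP p (z i))
          ≤ C * rT θ α β p * Complex.normSq (∑ i : Fin n, c i * gP p (z i)) := h1
        _ = C * (rT θ α β p * Complex.normSq (∑ i : Fin n, c i * gP p (z i))) := by ring
    have htle := Summable.tsum_le_tsum hterm hsη (hsαβ.mul_left C)
    rw [tsum_mul_left] at htle
    calc cConst θ α β / (C * cConst θ η η) * (cConst θ η η * ∑' p : ℕ × ℕ,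
          rT θ η η p * Complex.normSq (∑ i : Fin n, c i * gP p (z i)))
        ≤ cConst θ α β / (C * cConst θ η η) * (cConst θ η η * (C * ∑' p : ℕ × ℕ,
            rT θ α β p * Complex.normSq (∑ i : Fin n, c i * gP p (z i)))) := by
          apply mul_le_mul_of_nonneg_left (mul_le_mul_of_nonneg_left htle hcη.le)
          positivity
      _ = cConst θ α β * ∑' p : ℕ × ℕ,
            rT θ α β p * Complex.normSq (∑ i : Fin n, c i * gP p (z i)) := by
          field_simp
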